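/- Assume good X, good Y₁ and good Y₂. Then substitution of the same variable (at the same varsort) distributes over itself: X[Y₁/y]_ys[Y₂/y]_ys = X[(Y₁[Y₂/y]_ys)/y]_ys. -/

import Mathlib

open scoped Classical

universe u

section Binding

variable (var varsort index bindex opsym : Type u)

/-! ### Inputs -/

/-- An `(α,β)`-input: a partial function from `α` to `β`. -/
abbrev Input (α β : Type u) : Type u := α → Option β

/-- The domain of an input. -/
def idom {α β : Type u} (inp : Input α β) : Set α := {a | inp a ≠ none}

/-- The componentwise lifting of a predicate to inputs. -/
def liftP {α β : Type u} (P : β → Prop) (inp : Input α β) : Prop :=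
  ∀ a b, inp a = some b → P b

/-- The componentwise lifting of a function to inputs. -/
def liftF {α β γ : Type u} (f : β → γ) (inp : Input α β) : Input α γ :=
  fun a => (inp a).map f

/-- An input is small if its domain has cardinality smaller than that of `var`. -/
def smallDom {α β : Type u} (inp : Input α β) : Prop :=
  Cardinal.mk (idom inp) < Cardinal.mk var

/-! ### Quasiterms -/

mutual
/-- Quasiterms: raw terms before quotienting by alpha-equivalence. -/
inductive QTerm : Type u where
  | qVar : varsort → var → QTerm
  | qOp : opsym → (index → Option QTerm) → (bindex → Option QAbs) → QTerm
/-- Quasiabstractions. -/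
inductive QAbs : Type u where
  | qAbs : varsort → var → QTerm → QAbs
end

/-- Transposition of two variables. -/
noncomputable def swapVar (z1 z2 x : var) : var :=
  if x = z1 then z2 else if x = z2 then z1 else x

/-- Sort-aware transposition of variables (acts only on variables of varsort `zs`). -/
noncomputable def swapVarS (zs xs : varsort) (z1 z2 x : var) : var :=
  if xs = zs then swapVar var z1 z2 x else x

variable {var varsort index bindex opsym}

/-- Swapping of the variables `z1`, `z2` at varsort `zs` in a quasiterm
(transposing them everywhere, including binding positions). -/
noncomputable def qSwap (z1 z2 : var) (zs : varsort) :
    QTerm var varsort index bindex opsym → QTerm var varsort index bindex opsym :=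
  QTerm.rec (motive_1 := fun _ => QTerm var varsort index bindex opsym)
    (motive_2 := fun _ => QAbs var varsort index bindex opsym)
    (motive_3 := fun _ => Option (QTerm var varsort index bindex opsym))
    (motive_4 := fun _ => Option (QAbs var varsort index bindex opsym))
    (fun xs x => .qVar xs (swapVarS var varsort zs xs z1 z2 x))
    (fun d _ _ rinp rbinp => .qOp d rinp rbinp)
    (fun xs x _ rX => .qAbs xs (swapVarS var varsort zs xs z1 z2 x) rX)
    none (fun _ r => some r) none (fun _ r => some r)

/-- Swapping of variables in a quasiabstraction. -/
noncomputable def qSwapAbs (z1 z2 : var) (zs : varsort) :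
    QAbs var varsort index bindex opsym → QAbs var varsort index bindex opsym
  | .qAbs xs x X => .qAbs xs (swapVarS var varsort zs xs z1 z2 x) (qSwap z1 z2 zs X)

/-! ### Freshness and goodness -/

mutual
/-- `QFresh ys y X`: the variable `y` of varsort `ys` has no free occurrence in `X`. -/
inductive QFresh : varsort → var → QTerm var varsort index bindex opsym → Prop where
  | qVar : ∀ {ys y xs x}, (ys, y) ≠ (xs, x) → QFresh ys y (.qVar xs x)
  | qOp : ∀ {ys y d inp binp}, (∀ i X, inp i = some X → QFresh ys y X) →
      (∀ j A, binp j = some A → QFreshAbs ys y A) → QFresh ys y (.qOp d inp binp)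
/-- Freshness for quasiabstractions. -/
inductive QFreshAbs : varsort → var → QAbs var varsort index bindex opsym → Prop where
  | qAbs_bound : ∀ {xs x X}, QFreshAbs xs x (.qAbs xs x X)
  | qAbs_body : ∀ {ys y xs x X}, QFresh ys y X → QFreshAbs ys y (.qAbs xs x X)
end

mutual
/-- Good quasiterms: all constructors branch less than `|var|`. -/
inductive QGood : QTerm var varsort index bindex opsym → Prop where
  | qVar : ∀ {xs x}, QGood (.qVar xs x)
  | qOp : ∀ {d inp binp}, (∀ i X, inp i = some X → QGood X) →
      (∀ j A, binp j = some A → QGoodAbs A) →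
      smallDom var inp → smallDom var binp → QGood (.qOp d inp binp)
/-- Good quasiabstractions. -/
inductive QGoodAbs : QAbs var varsort index bindex opsym → Prop where
  | qAbs : ∀ {xs x X}, QGood X → QGoodAbs (.qAbs xs x X)
end

/-! ### Alpha-equivalence -/

mutual
/-- Alpha-equivalence of quasiterms. -/
inductive Alpha : QTerm var varsort index bindex opsym →
    QTerm var varsort index bindex opsym → Prop where
  | qVar : ∀ {xs x}, Alpha (.qVar xs x) (.qVar xs x)
  | qOp : ∀ {d inp binp inp' binp'},
      (∀ i, inp i = none ↔ inp' i = none) →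
      (∀ i X X', inp i = some X → inp' i = some X' → Alpha X X') →
      (∀ j, binp j = none ↔ binp' j = none) →
      (∀ j A A', binp j = some A → binp' j = some A' → AlphaAbs A A') →
      Alpha (.qOp d inp binp) (.qOp d inp' binp')
/-- Alpha-equivalence of quasiabstractions (the exists-fresh formulation). -/
inductive AlphaAbs : QAbs var varsort index bindex opsym →
    QAbs var varsort index bindex opsym → Prop where
  | qAbs : ∀ {xs x x' X X' y}, y ∉ ({x, x'} : Set var) →
      QFresh xs y X → QFresh xs y X' →
      Alpha (qSwap y x xs X) (qSwap y x' xs X') →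
      AlphaAbs (.qAbs xs x X) (.qAbs xs x' X')
end

/-! ### Terms and abstractions as quotients -/

variable (var varsort index bindex opsym)

/-- Terms: quasiterms modulo alpha-equivalence. -/
def Term : Type u := Quot (@Alpha var varsort index bindex opsym)

/-- Abstractions: quasiabstractions modulo alpha-equivalence. -/
def Abstr : Type u := Quot (@AlphaAbs var varsort index bindex opsym)

variable {var varsort index bindex opsym}

/-- The projection from quasiterms to terms. -/
def tmk : QTerm var varsort index bindex opsym → Term var varsort index bindex opsym :=
  Quot.mk _

/-- The projection from quasiabstractions to abstractions. -/
def amk : QAbs var varsort index bindex opsym → Abstr var varsort index bindex opsym :=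
  Quot.mk _

/-- A representative of a term. -/
noncomputable def trep (X : Term var varsort index bindex opsym) :
    QTerm var varsort index bindex opsym := Quot.out X

/-- A representative of an abstraction. -/
noncomputable def arep (A : Abstr var varsort index bindex opsym) :
    QAbs var varsort index bindex opsym := Quot.out A

/-- Good terms. -/
def good (X : Term var varsort index bindex opsym) : Prop := QGood (trep X)

/-- Good abstractions. -/
def goodAbs (A : Abstr var varsort index bindex opsym) : Prop := QGoodAbs (arep A)

/-- The variable-injection constructor on terms. -/
def Var (xs : varsort) (x : var) : Term var varsort index bindex opsym :=
  tmk (.qVar xs x)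

/-- The operation constructor on terms. -/
noncomputable def Op (d : opsym) (inp : Input index (Term var varsort index bindex opsym))
    (binp : Input bindex (Abstr var varsort index bindex opsym)) :
    Term var varsort index bindex opsym :=
  tmk (.qOp d (liftF trep inp) (liftF arep binp))

/-- The abstraction constructor. -/
noncomputable def Abs (xs : varsort) (x : var) (X : Term var varsort index bindex opsym) :
    Abstr var varsort index bindex opsym :=
  amk (.qAbs xs x (trep X))

/-- Freshness on terms. -/
def fresh (ys : varsort) (y : var) (X : Term var varsort index bindex opsym) : Prop :=
  QFresh ys y (trep X)

/-- Freshness on abstractions. -/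
def freshAbs (ys : varsort) (y : var) (A : Abstr var varsort index bindex opsym) : Prop :=
  QFreshAbs ys y (arep A)

/-- Swapping on terms. -/
noncomputable def tswap (X : Term var varsort index bindex opsym)
    (z1 z2 : var) (zs : varsort) : Term var varsort index bindex opsym :=
  tmk (qSwap z1 z2 zs (trep X))

/-! ### Substitution -/

mutual
/-- The graph of capture-avoiding substitution on quasiterms:
`QSubst X Y y ys Z` means that `Z` is a result of substituting `Y` for the free
occurrences of the variable `y` of varsort `ys` in `X` (along a capture-free
representative). -/
inductive QSubst : QTerm var varsort index bindex opsym →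
    QTerm var varsort index bindex opsym → var → varsort →
    QTerm var varsort index bindex opsym → Prop where
  | var_eq : ∀ {Y y ys}, QSubst (.qVar ys y) Y y ys Y
  | var_ne : ∀ {Y y ys xs x}, (xs, x) ≠ (ys, y) → QSubst (.qVar xs x) Y y ys (.qVar xs x)
  | op : ∀ {Y y ys d inp binp inp' binp'},
      (∀ i, inp i = none ↔ inp' i = none) →
      (∀ i X X', inp i = some X → inp' i = some X' → QSubst X Y y ys X') →
      (∀ j, binp j = none ↔ binp' j = none) →
      (∀ j A A', binp j = some A → binp' j = some A' → QSubstAbs A Y y ys A') →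
      QSubst (.qOp d inp binp) Y y ys (.qOp d inp' binp')
/-- The graph of capture-avoiding substitution on quasiabstractions. -/
inductive QSubstAbs : QAbs var varsort index bindex opsym →
    QTerm var varsort index bindex opsym → var → varsort →
    QAbs var varsort index bindex opsym → Prop where
  | abs : ∀ {Y y ys xs x X X'}, (xs, x) ≠ (ys, y) → QFresh xs x Y →
      QSubst X Y y ys X' → QSubstAbs (.qAbs xs x X) Y y ys (.qAbs xs x X')
end

/-- The graph of capture-avoiding substitution on terms. -/
def SubstRel (X Y : Term var varsort index bindex opsym) (y : var) (ys : varsort)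
    (Z : Term var varsort index bindex opsym) : Prop :=
  ∃ qX qZ, tmk qX = X ∧ tmk qZ = Z ∧ QSubst qX (trep Y) y ys qZ

/-- Capture-avoiding substitution on terms: `subst X Y y ys` is `X[Y/y]_ys`. -/
noncomputable def subst (X Y : Term var varsort index bindex opsym)
    (y : var) (ys : varsort) : Term var varsort index bindex opsym :=
  if h : ∃ Z, SubstRel X Y y ys Z then h.choose else X

/-- The graph of capture-avoiding substitution on abstractions. -/
def SubstAbsRel (A : Abstr var varsort index bindex opsym)
    (Y : Term var varsort index bindex opsym) (y : var) (ys : varsort)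
    (B : Abstr var varsort index bindex opsym) : Prop :=
  ∃ qA qB, amk qA = A ∧ amk qB = B ∧ QSubstAbs qA (trep Y) y ys qB

/-- Capture-avoiding substitution on abstractions: `substAbs A Y y ys` is `A[Y/y]_ys`. -/
noncomputable def substAbs (A : Abstr var varsort index bindex opsym)
    (Y : Term var varsort index bindex opsym) (y : var) (ys : varsort) :
    Abstr var varsort index bindex opsym :=
  if h : ∃ B, SubstAbsRel A Y y ys B then h.choose else A

/-! ### Parallel substitution -/

mutual
/-- The graph of capture-avoiding parallel substitution on quasiterms, along an
assignment `ρ : varsort → var → Option qterm`. -/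
inductive QPSubst : QTerm var varsort index bindex opsym →
    (varsort → var → Option (QTerm var varsort index bindex opsym)) →
    QTerm var varsort index bindex opsym → Prop where
  | var_some : ∀ {ρ xs x Y}, ρ xs x = some Y → QPSubst (.qVar xs x) ρ Y
  | var_none : ∀ {ρ xs x}, ρ xs x = none → QPSubst (.qVar xs x) ρ (.qVar xs x)
  | op : ∀ {ρ d inp binp inp' binp'},
      (∀ i, inp i = none ↔ inp' i = none) →
      (∀ i X X', inp i = some X → inp' i = some X' → QPSubst X ρ X') →
      (∀ j, binp j = none ↔ binp' j = none) →
      (∀ j A A', binp j = some A → binp' j = some A' → QPSubstAbs A ρ A') →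
      QPSubst (.qOp d inp binp) ρ (.qOp d inp' binp')
/-- The graph of capture-avoiding parallel substitution on quasiabstractions. -/
inductive QPSubstAbs : QAbs var varsort index bindex opsym →
    (varsort → var → Option (QTerm var varsort index bindex opsym)) →
    QAbs var varsort index bindex opsym → Prop where
  | abs : ∀ {ρ xs x X X'}, ρ xs x = none →
      (∀ ys y Y, ρ ys y = some Y → QFresh xs x Y) →
      QPSubst X ρ X' → QPSubstAbs (.qAbs xs x X) ρ (.qAbs xs x X')
end

/-- Turning a term-valued assignment into a quasiterm-valued one, by picking
representatives. -/
noncomputable def qassign (ρ : varsort → var → Option (Term var varsort index bindex opsym)) :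
    varsort → var → Option (QTerm var varsort index bindex opsym) :=
  fun xs x => (ρ xs x).map trep

/-- The graph of parallel substitution on terms. -/
def PSubstRel (X : Term var varsort index bindex opsym)
    (ρ : varsort → var → Option (Term var varsort index bindex opsym))
    (Z : Term var varsort index bindex opsym) : Prop :=
  ∃ qX qZ, tmk qX = X ∧ tmk qZ = Z ∧ QPSubst qX (qassign ρ) qZ

/-- Capture-avoiding parallel substitution on terms: `psubst X ρ` is `X[ρ]`. -/
noncomputable def psubst (X : Term var varsort index bindex opsym)
    (ρ : varsort → var → Option (Term var varsort index bindex opsym)) :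
    Term var varsort index bindex opsym :=
  if h : ∃ Z, PSubstRel X ρ Z then h.choose else X

/-- The graph of parallel substitution on abstractions. -/
def PSubstAbsRel (A : Abstr var varsort index bindex opsym)
    (ρ : varsort → var → Option (Term var varsort index bindex opsym))
    (B : Abstr var varsort index bindex opsym) : Prop :=
  ∃ qA qB, amk qA = A ∧ amk qB = B ∧ QPSubstAbs qA (qassign ρ) qB

/-- Capture-avoiding parallel substitution on abstractions. -/
noncomputable def psubstAbs (A : Abstr var varsort index bindex opsym)
    (ρ : varsort → var → Option (Term var varsort index bindex opsym)) :
    Abstr var varsort index bindex opsym :=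
  if h : ∃ B, PSubstAbsRel A ρ B then h.choose else A


/-! Quasiterms are translated into locally nameless terms: binders become de Bruijn indices,
free variables keep their names. On good quasiterms the translation identifies exactly the
alpha-equivalent ones. Completeness, like the existence of a representative whose binders avoid a
given small set of variables, needs fresh variables; they exist because a good quasiterm uses fewer
than `|var|` variables and `|var|` is regular. Along such a representative, capture-avoiding
substitution becomes the naive substitution of locally nameless terms, for which substituting twice
for the same variable is a plain structural induction. -/

open Cardinal

theorem swapVar_eq_swap (z1 z2 : var) : swapVar var z1 z2 = Equiv.swap z1 z2 := by
  funext x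
  rw [swapVar, Equiv.swap_apply_def]

theorem swapVarS_swapVarS (zs xs : varsort) (z1 z2 x : var) :
    swapVarS var varsort zs xs z1 z2 (swapVarS var varsort zs xs z1 z2 x) = x := by
  unfold swapVarS
  split_ifs <;> simp [swapVar_eq_swap]

theorem swapVarS_injective (zs xs : varsort) (z1 z2 : var) :
    Function.Injective (swapVarS var varsort zs xs z1 z2) :=
  Function.LeftInverse.injective (swapVarS_swapVarS zs xs z1 z2)

/-- `none` fills the indices outside the domain of an operation input. -/
inductive DBTerm (V VS I BI O : Type u) : Type u where
  | none
  | free (xs : VS) (x : V)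
  | bound (n : ℕ)
  | op (d : O) (inp : I → DBTerm V VS I BI O) (binp : BI → DBTerm V VS I BI O)
  | abs (xs : VS) (t : DBTerm V VS I BI O)

namespace DBTerm

variable {V VS I BI O : Type u}

noncomputable def closeVar (p : VS × V) : ℕ → DBTerm V VS I BI O → DBTerm V VS I BI O
  | _, none => none
  | k, free xs x => if (xs, x) = p then bound k else free xs x
  | _, bound n => bound n
  | k, op d inp binp => op d (fun i => closeVar p k (inp i)) (fun j => closeVar p k (binp j))
  | k, abs xs t => abs xs (closeVar p (k + 1) t)

def openVar (p : VS × V) : ℕ → DBTerm V VS I BI O → DBTerm V VS I BI O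
  | _, none => none
  | _, free xs x => free xs x
  | k, bound n => if n = k then free p.1 p.2 else bound n
  | k, op d inp binp => op d (fun i => openVar p k (inp i)) (fun j => openVar p k (binp j))
  | k, abs xs t => abs xs (openVar p (k + 1) t)

def LocallyClosedAt : ℕ → DBTerm V VS I BI O → Prop
  | _, none => True
  | _, free _ _ => True
  | k, bound n => n < k
  | k, op _ inp binp => (∀ i, LocallyClosedAt k (inp i)) ∧ ∀ j, LocallyClosedAt k (binp j)
  | k, abs _ t => LocallyClosedAt (k + 1) t

def fv : DBTerm V VS I BI O → Set (VS × V)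
  | none => ∅
  | free xs x => {(xs, x)}
  | bound _ => ∅
  | op _ inp binp => (⋃ i, fv (inp i)) ∪ ⋃ j, fv (binp j)
  | abs _ t => fv t

def rename (f : VS → V → V) : DBTerm V VS I BI O → DBTerm V VS I BI O
  | none => none
  | free xs x => free xs (f xs x)
  | bound n => bound n
  | op d inp binp => op d (fun i => rename f (inp i)) (fun j => rename f (binp j))
  | abs xs t => abs xs (rename f t)

noncomputable def subst : DBTerm V VS I BI O → VS × V → DBTerm V VS I BI O → DBTerm V VS I BI O
  | none, _, _ => none
  | free xs x, q, T => if (xs, x) = q then T else free xs x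
  | bound n, _, _ => bound n
  | op d inp binp, q, T => op d (fun i => subst (inp i) q T) (fun j => subst (binp j) q T)
  | abs xs t, q, T => abs xs (subst t q T)

theorem subst_subst_same (t : DBTerm V VS I BI O) (q : VS × V) (T₁ T₂ : DBTerm V VS I BI O) :
    (t.subst q T₁).subst q T₂ = t.subst q (T₁.subst q T₂) := by
  induction t with
  | free xs x => by_cases h : (xs, x) = q <;> simp [subst, h]
  | op d inp binp ih₁ ih₂ => simp [subst, ih₁, ih₂]
  | abs xs t ih => simp [subst, ih]
  | _ => rfl

theorem openVar_closeVar {p : VS × V} {k : ℕ} {t : DBTerm V VS I BI O}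
    (ht : LocallyClosedAt k t) : openVar p k (closeVar p k t) = t := by
  induction t generalizing k with
  | free xs x =>
      by_cases h : (xs, x) = p
      · subst h; simp [closeVar, openVar]
      · simp [closeVar, openVar, h]
  | bound n => simp [LocallyClosedAt] at ht; simp [closeVar, openVar, ht.ne]
  | op d inp binp ih₁ ih₂ => simp [closeVar, openVar, ih₁ _ (ht.1 _), ih₂ _ (ht.2 _)]
  | abs xs t ih => simp [closeVar, openVar, ih ht]
  | none => rfl

theorem closeVar_inj {p : VS × V} {k : ℕ} {t t' : DBTerm V VS I BI O}
    (ht : LocallyClosedAt k t) (ht' : LocallyClosedAt k t')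
    (h : closeVar p k t = closeVar p k t') : t = t' := by
  rw [← openVar_closeVar (p := p) ht, h, openVar_closeVar ht']

theorem locallyClosedAt_closeVar {p : VS × V} {k : ℕ} {t : DBTerm V VS I BI O}
    (ht : LocallyClosedAt k t) : LocallyClosedAt (k + 1) (closeVar p k t) := by
  induction t generalizing k with
  | free xs x => by_cases h : (xs, x) = p <;> simp [closeVar, LocallyClosedAt, h]
  | bound n => simp only [LocallyClosedAt] at ht; simp [closeVar, LocallyClosedAt]; omega
  | op d inp binp ih₁ ih₂ =>
      exact ⟨fun i => ih₁ i (ht.1 i), fun j => ih₂ j (ht.2 j)⟩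
  | abs xs t ih => exact ih ht
  | none => trivial

theorem fv_closeVar (p : VS × V) (k : ℕ) (t : DBTerm V VS I BI O) :
    fv (closeVar p k t) = fv t \ {p} := by
  induction t generalizing k with
  | free xs x =>
      by_cases h : (xs, x) = p
      · simp [closeVar, fv, h]
      · simp [closeVar, fv, h, Set.sdiff_singleton_eq_self (Set.notMem_singleton_iff.2 (Ne.symm h))]
  | op d inp binp ih₁ ih₂ =>
      simp [closeVar, fv, ih₁, ih₂, Set.union_sdiff_distrib, Set.iUnion_sdiff]
  | abs xs t ih => simp [closeVar, fv, ih]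
  | _ => simp [closeVar, fv]

theorem closeVar_of_notMem_fv {p : VS × V} {t : DBTerm V VS I BI O} (h : p ∉ fv t) (k : ℕ) :
    closeVar p k t = t := by
  induction t generalizing k with
  | free xs x => simp [fv] at h; simp [closeVar, Ne.symm h]
  | op d inp binp ih₁ ih₂ =>
      simp only [fv, Set.mem_union, Set.mem_iUnion, not_or, not_exists] at h
      simp [closeVar, ih₁ _ (h.1 _), ih₂ _ (h.2 _)]
  | abs xs t ih => simp [closeVar, ih h]
  | _ => rfl

theorem closeVar_subst {p q : VS × V} {T : DBTerm V VS I BI O} (hpq : p ≠ q) (hp : p ∉ fv T)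
    (k : ℕ) (t : DBTerm V VS I BI O) :
    closeVar p k (t.subst q T) = (closeVar p k t).subst q T := by
  induction t generalizing k with
  | free xs x =>
      by_cases hq : (xs, x) = q
      · simp [subst, closeVar, hq, hpq.symm, closeVar_of_notMem_fv hp]
      · by_cases hp' : (xs, x) = p
        · subst hp'; simp [subst, closeVar, hq]
        · simp [subst, closeVar, hq, hp']
  | op d inp binp ih₁ ih₂ => simp [subst, closeVar, ih₁, ih₂]
  | abs xs t ih => simp [subst, closeVar, ih]
  | _ => rfl

theorem rename_closeVar {f : VS → V → V} (hf : ∀ s, Function.Injective (f s)) (p : VS × V)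
    (k : ℕ) (t : DBTerm V VS I BI O) :
    rename f (closeVar p k t) = closeVar (p.1, f p.1 p.2) k (rename f t) := by
  induction t generalizing k with
  | free xs x =>
      by_cases h : (xs, x) = p
      · subst h; simp [closeVar, rename]
      · have h' : (xs, f xs x) ≠ (p.1, f p.1 p.2) := by
          intro hc
          obtain ⟨rfl, hx⟩ := Prod.mk.inj hc
          exact h (by rw [hf _ hx])
        simp [closeVar, rename, h, h']
  | op d inp binp ih₁ ih₂ => simp [closeVar, rename, ih₁, ih₂]
  | abs xs t ih => simp [closeVar, rename, ih]
  | _ => rfl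

theorem rename_eq_self {f : VS → V → V} {t : DBTerm V VS I BI O}
    (h : ∀ p ∈ fv t, f p.1 p.2 = p.2) : rename f t = t := by
  induction t with
  | free xs x => simp [rename, h (xs, x) (by simp [fv])]
  | op d inp binp ih₁ ih₂ =>
      simp only [fv, Set.mem_union, Set.mem_iUnion] at h
      simp only [rename, op.injEq, true_and]
      exact ⟨funext fun i => ih₁ i fun p hp => h p (.inl ⟨i, hp⟩),
        funext fun j => ih₂ j fun p hp => h p (.inr ⟨j, hp⟩)⟩
  | abs xs t ih => simp [rename, ih h]
  | _ => rfl

theorem closeVar_rename_swap {xs : VS} {x y : V} {t : DBTerm V VS I BI O} (hy : (xs, y) ∉ fv t)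
    (k : ℕ) :
    closeVar (xs, y) k (rename (fun s => swapVarS V VS xs s y x) t) = closeVar (xs, x) k t := by
  have hclose := rename_closeVar (fun s => swapVarS_injective xs s y x) (xs, x) k t
  simp only [swapVarS, swapVar_eq_swap, if_true, Equiv.swap_apply_right] at hclose
  rw [← hclose]
  refine rename_eq_self fun p hp => ?_
  rw [fv_closeVar] at hp
  obtain ⟨hpt, hpx⟩ := hp
  unfold swapVarS
  split_ifs with hs
  · subst hs
    rw [swapVar_eq_swap, Equiv.swap_apply_of_ne_of_ne]
    · exact fun h => hy (by rwa [← h])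
    · exact fun h => hpx (by simp [← h])
  · rfl

end DBTerm

theorem Option.cases_of_none_iff {α β : Type*} {o : Option α} {o' : Option β}
    (h : o = none ↔ o' = none) : (o = none ∧ o' = none) ∨ ∃ a b, o = some a ∧ o' = some b := by
  cases o <;> cases o' <;> simp_all

theorem Option.exists_eq_some_of_none_iff {α β : Type*} {o : Option α} {o' : Option β}
    (h : o = none ↔ o' = none) {b : β} (hb : o' = some b) : ∃ a, o = some a := by
  cases o <;> simp_all

theorem liftP_of_none_iff {α β γ : Type u} {inp : Input α β} {inp' : Input α γ}
    {Q : γ → Prop} (hn : ∀ a, inp a = none ↔ inp' a = none)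
    (h : ∀ a b c, inp a = some b → inp' a = some c → Q c) : liftP Q inp' := by
  intro a c hc
  obtain ⟨b, hb⟩ := Option.exists_eq_some_of_none_iff (hn a) hc
  exact h a b c hb hc

theorem liftP_iff_of_none_iff {α β γ : Type u} {inp : Input α β} {inp' : Input α γ}
    {P : β → Prop} {Q : γ → Prop} (hn : ∀ a, inp a = none ↔ inp' a = none)
    (h : ∀ a b c, inp a = some b → inp' a = some c → (P b ↔ Q c)) :
    liftP P inp ↔ liftP Q inp' :=
  ⟨fun hP => liftP_of_none_iff hn fun a b c hb hc => (h a b c hb hc).1 (hP a b hb),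
    fun hQ => liftP_of_none_iff (fun a => (hn a).symm) fun a c b hc hb =>
      (h a b c hb hc).2 (hQ a c hc)⟩

theorem smallDom_iff_of_none_iff {α β γ : Type u} {inp : Input α β} {inp' : Input α γ}
    (hn : ∀ a, inp a = none ↔ inp' a = none) : smallDom var inp ↔ smallDom var inp' := by
  have : idom inp = idom inp' := Set.ext fun a => not_congr (hn a)
  rw [smallDom, smallDom, this]

theorem exists_input_rel {α β γ : Type u} {inp : Input α β} {R : β → γ → Prop}
    (h : ∀ a b, inp a = some b → ∃ c, R b c) :
    ∃ inp' : Input α γ, (∀ a, inp a = none ↔ inp' a = none) ∧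
      ∀ a b c, inp a = some b → inp' a = some c → R b c := by
  choose f hf using h
  refine ⟨fun a => (inp a).pbind fun b hb => some (f a b hb), fun a => ?_, fun a b c hb hc => ?_⟩
  · cases h : inp a <;> simp [h]
  · obtain ⟨b', hb', hfc⟩ := Option.pbind_eq_some_iff.1 hc
    cases hb.symm.trans hb'
    cases hfc
    exact hf a b hb'

theorem QTerm.mutual_induction {P : QTerm var varsort index bindex opsym → Prop}
    {Q : QAbs var varsort index bindex opsym → Prop}
    (qVar : ∀ xs x, P (.qVar xs x))
    (qOp : ∀ d inp binp, liftP P inp → liftP Q binp → P (.qOp d inp binp))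
    (qAbs : ∀ xs x X, P X → Q (.qAbs xs x X)) :
    (∀ X, P X) ∧ ∀ A, Q A := by
  constructor
  · intro X
    exact QTerm.rec (motive_1 := P) (motive_2 := Q) (motive_3 := fun o => ∀ X, o = some X → P X)
      (motive_4 := fun o => ∀ A, o = some A → Q A) qVar qOp qAbs (by simp)
      (fun _ h _ e => Option.some_injective _ e ▸ h) (by simp)
      (fun _ h _ e => Option.some_injective _ e ▸ h) X
  · intro A
    exact QAbs.rec (motive_1 := P) (motive_2 := Q) (motive_3 := fun o => ∀ X, o = some X → P X)
      (motive_4 := fun o => ∀ A, o = some A → Q A) qVar qOp qAbs (by simp)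
      (fun _ h _ e => Option.some_injective _ e ▸ h) (by simp)
      (fun _ h _ e => Option.some_injective _ e ▸ h) A

@[simp] theorem qSwap_qVar (z1 z2 : var) (zs xs : varsort) (x : var) :
    qSwap (index := index) (bindex := bindex) (opsym := opsym) z1 z2 zs (.qVar xs x)
      = .qVar xs (swapVarS var varsort zs xs z1 z2 x) := rfl

@[simp] theorem qSwap_qOp (z1 z2 : var) (zs : varsort) (d : opsym)
    (inp : Input index (QTerm var varsort index bindex opsym))
    (binp : Input bindex (QAbs var varsort index bindex opsym)) :
    qSwap z1 z2 zs (.qOp d inp binp)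
      = .qOp d (fun i => (inp i).map (qSwap z1 z2 zs))
          (fun j => (binp j).map (qSwapAbs z1 z2 zs)) := by
  change QTerm.qOp _ _ _ = _
  congr 1
  · funext i; cases inp i <;> rfl
  · funext j; rcases binp j with _ | ⟨_, _, _⟩ <;> rfl

@[simp] theorem qSwapAbs_qAbs (z1 z2 : var) (zs xs : varsort) (x : var)
    (X : QTerm var varsort index bindex opsym) :
    qSwapAbs z1 z2 zs (.qAbs xs x X)
      = .qAbs xs (swapVarS var varsort zs xs z1 z2 x) (qSwap z1 z2 zs X) := rfl

theorem qSwap_qSwap (z1 z2 : var) (zs : varsort) :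
    (∀ X : QTerm var varsort index bindex opsym, qSwap z1 z2 zs (qSwap z1 z2 zs X) = X) ∧
    ∀ A : QAbs var varsort index bindex opsym, qSwapAbs z1 z2 zs (qSwapAbs z1 z2 zs A) = A := by
  apply QTerm.mutual_induction
  · simp [swapVarS_swapVarS]
  · intro d inp binp ih₁ ih₂
    simp only [qSwap_qOp, Option.map_map, QTerm.qOp.injEq, true_and]
    constructor
    · funext i
      cases h : inp i with
      | none => rfl
      | some X => simp [ih₁ i X h]
    · funext j
      cases h : binp j with
      | none => rfl
      | some A => simp [ih₂ j A h]
  · simp_all [swapVarS_swapVarS]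

mutual
noncomputable def QTerm.toDB : QTerm var varsort index bindex opsym →
    DBTerm var varsort index bindex opsym
  | .qVar xs x => .free xs x
  | .qOp d inp binp => .op d (fun i => QTerm.optToDB (inp i)) (fun j => QAbs.optToDB (binp j))
noncomputable def QAbs.toDB : QAbs var varsort index bindex opsym →
    DBTerm var varsort index bindex opsym
  | .qAbs xs x X => .abs xs ((QTerm.toDB X).closeVar (xs, x) 0)
noncomputable def QTerm.optToDB : Option (QTerm var varsort index bindex opsym) →
    DBTerm var varsort index bindex opsym
  | none => .none
  | some X => QTerm.toDB X
noncomputable def QAbs.optToDB : Option (QAbs var varsort index bindex opsym) →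
    DBTerm var varsort index bindex opsym
  | none => .none
  | some A => QAbs.toDB A
end

theorem QTerm.optToDB_eq_none_iff {o : Option (QTerm var varsort index bindex opsym)} :
    QTerm.optToDB o = .none ↔ o = none := by
  rcases o with _ | _ | _ <;> simp [QTerm.optToDB, QTerm.toDB]

theorem QAbs.optToDB_eq_none_iff {o : Option (QAbs var varsort index bindex opsym)} :
    QAbs.optToDB o = .none ↔ o = none := by
  rcases o with _ | ⟨_, _, _⟩ <;> simp [QAbs.optToDB, QAbs.toDB]

theorem locallyClosedAt_toDB :
    (∀ X : QTerm var varsort index bindex opsym, X.toDB.LocallyClosedAt 0) ∧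
    ∀ A : QAbs var varsort index bindex opsym, A.toDB.LocallyClosedAt 0 := by
  apply QTerm.mutual_induction
  · intro xs x; trivial
  · intro d inp binp ih₁ ih₂
    refine ⟨fun i => ?_, fun j => ?_⟩
    · cases h : inp i with
      | none => simp [QTerm.optToDB, h, DBTerm.LocallyClosedAt]
      | some X => simpa [QTerm.optToDB, h] using ih₁ i X h
    · cases h : binp j with
      | none => simp [QAbs.optToDB, h, DBTerm.LocallyClosedAt]
      | some A => simpa [QAbs.optToDB, h] using ih₂ j A h
  · intro xs x X ih
    exact DBTerm.locallyClosedAt_closeVar ih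

theorem toDB_qSwap (z1 z2 : var) (zs : varsort) :
    (∀ X : QTerm var varsort index bindex opsym,
      (qSwap z1 z2 zs X).toDB = X.toDB.rename fun s => swapVarS var varsort zs s z1 z2) ∧
    ∀ A : QAbs var varsort index bindex opsym,
      (qSwapAbs z1 z2 zs A).toDB = A.toDB.rename fun s => swapVarS var varsort zs s z1 z2 := by
  apply QTerm.mutual_induction
  · intro xs x; rfl
  · intro d inp binp ih₁ ih₂
    simp only [qSwap_qOp, QTerm.toDB, DBTerm.rename, DBTerm.op.injEq, true_and]
    constructor
    · funext i
      cases h : inp i with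
      | none => rfl
      | some X => simp [QTerm.optToDB, ih₁ i X h]
    · funext j
      cases h : binp j with
      | none => rfl
      | some A => simp [QAbs.optToDB, ih₂ j A h]
  · intro xs x X ih
    simp [QAbs.toDB, DBTerm.rename, ih,
      DBTerm.rename_closeVar fun s => swapVarS_injective zs s z1 z2]

mutual
theorem QFresh.notMem_fv {ys : varsort} {y : var} :
    ∀ {X : QTerm var varsort index bindex opsym}, QFresh ys y X → (ys, y) ∉ X.toDB.fv
  | _, .qVar h => by simpa [QTerm.toDB, DBTerm.fv] using h
  | _, .qOp (inp := inp) (binp := binp) h₁ h₂ => by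
      simp only [QTerm.toDB, DBTerm.fv, Set.mem_union, Set.mem_iUnion, not_or, not_exists]
      refine ⟨fun i => ?_, fun j => ?_⟩
      · cases h : inp i
        · simp [QTerm.optToDB, DBTerm.fv]
        · exact QFresh.notMem_fv (h₁ i _ h)
      · cases h : binp j
        · simp [QAbs.optToDB, DBTerm.fv]
        · exact QFreshAbs.notMem_fv (h₂ j _ h)
theorem QFreshAbs.notMem_fv {ys : varsort} {y : var} :
    ∀ {A : QAbs var varsort index bindex opsym}, QFreshAbs ys y A → (ys, y) ∉ A.toDB.fv
  | _, .qAbs_bound => by simp [QAbs.toDB, DBTerm.fv, DBTerm.fv_closeVar]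
  | _, .qAbs_body h => by
      simp [QAbs.toDB, DBTerm.fv, DBTerm.fv_closeVar, QFresh.notMem_fv h]
end

theorem closeVar_toDB_qSwap {xs : varsort} {x u : var} {X : QTerm var varsort index bindex opsym}
    (hu : QFresh xs u X) (k : ℕ) :
    (qSwap u x xs X).toDB.closeVar (xs, u) k = X.toDB.closeVar (xs, x) k := by
  rw [(toDB_qSwap _ _ _).1, DBTerm.closeVar_rename_swap (QFresh.notMem_fv hu)]

mutual
theorem Alpha.toDB_eq : ∀ {X X' : QTerm var varsort index bindex opsym},
    Alpha X X' → X.toDB = X'.toDB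
  | _, _, .qVar => rfl
  | _, _, .qOp hn h hnb hb => by
      simp only [QTerm.toDB, DBTerm.op.injEq, true_and]
      constructor
      · funext i
        rcases Option.cases_of_none_iff (hn i) with ⟨e, e'⟩ | ⟨X, X', e, e'⟩
        · rw [e, e']
        · simp only [e, e', QTerm.optToDB, Alpha.toDB_eq (h i X X' e e')]
      · funext j
        rcases Option.cases_of_none_iff (hnb j) with ⟨e, e'⟩ | ⟨A, A', e, e'⟩
        · rw [e, e']
        · simp only [e, e', QAbs.optToDB, AlphaAbs.toDB_eq (hb j A A' e e')]
theorem AlphaAbs.toDB_eq : ∀ {A A' : QAbs var varsort index bindex opsym},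
    AlphaAbs A A' → A.toDB = A'.toDB
  | .qAbs xs _ _, _, .qAbs (y := y) _ hf hf' h => by
      have := congrArg (DBTerm.closeVar (xs, y) 0) (Alpha.toDB_eq h)
      rw [closeVar_toDB_qSwap hf, closeVar_toDB_qSwap hf'] at this
      simp [QAbs.toDB, this]
end

theorem good_qOp_iff {d : opsym} {inp : Input index (QTerm var varsort index bindex opsym)}
    {binp : Input bindex (QAbs var varsort index bindex opsym)} :
    QGood (.qOp d inp binp) ↔
      liftP QGood inp ∧ liftP QGoodAbs binp ∧ smallDom var inp ∧ smallDom var binp :=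
  ⟨fun | .qOp h₁ h₂ hs₁ hs₂ => ⟨h₁, h₂, hs₁, hs₂⟩, fun ⟨h₁, h₂, hs₁, hs₂⟩ => .qOp h₁ h₂ hs₁ hs₂⟩

theorem good_qAbs_iff {xs : varsort} {x : var} {X : QTerm var varsort index bindex opsym} :
    QGoodAbs (.qAbs xs x X) ↔ QGood X :=
  ⟨fun | .qAbs h => h, .qAbs⟩

mutual
theorem QGood.qSwap (z1 z2 : var) (zs : varsort) :
    ∀ {X : QTerm var varsort index bindex opsym}, QGood X → QGood (qSwap z1 z2 zs X)
  | _, .qVar => .qVar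
  | _, .qOp (inp := inp) (binp := binp) h₁ h₂ hs₁ hs₂ => by
      have hn : ∀ i, inp i = none ↔ (inp i).map (qSwap z1 z2 zs) = none :=
        fun i => Option.map_eq_none_iff.symm
      have hnb : ∀ j, binp j = none ↔ (binp j).map (qSwapAbs z1 z2 zs) = none :=
        fun j => Option.map_eq_none_iff.symm
      rw [qSwap_qOp, good_qOp_iff]
      refine ⟨liftP_of_none_iff hn fun i X X' e e' => ?_,
        liftP_of_none_iff hnb fun j A A' e e' => ?_,
        (smallDom_iff_of_none_iff hn).1 hs₁, (smallDom_iff_of_none_iff hnb).1 hs₂⟩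
      · simp only [e, Option.map_some, Option.some.injEq] at e'
        exact e' ▸ QGood.qSwap z1 z2 zs (h₁ i X e)
      · simp only [e, Option.map_some, Option.some.injEq] at e'
        exact e' ▸ QGoodAbs.qSwapAbs z1 z2 zs (h₂ j A e)
theorem QGoodAbs.qSwapAbs (z1 z2 : var) (zs : varsort) :
    ∀ {A : QAbs var varsort index bindex opsym}, QGoodAbs A → QGoodAbs (qSwapAbs z1 z2 zs A)
  | _, .qAbs h => .qAbs (QGood.qSwap z1 z2 zs h)
end

theorem good_qSwap_iff {z1 z2 : var} {zs : varsort} {X : QTerm var varsort index bindex opsym} :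
    QGood (qSwap z1 z2 zs X) ↔ QGood X :=
  ⟨fun h => (qSwap_qSwap z1 z2 zs).1 X ▸ h.qSwap z1 z2 zs, fun h => h.qSwap z1 z2 zs⟩

mutual
theorem Alpha.good_iff : ∀ {X X' : QTerm var varsort index bindex opsym},
    Alpha X X' → (QGood X ↔ QGood X')
  | _, _, .qVar => Iff.rfl
  | _, _, .qOp hn h hnb hb => by
      rw [good_qOp_iff, good_qOp_iff,
        liftP_iff_of_none_iff hn fun i X X' e e' => Alpha.good_iff (h i X X' e e'),
        liftP_iff_of_none_iff hnb fun j A A' e e' => AlphaAbs.good_iff (hb j A A' e e'),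
        smallDom_iff_of_none_iff hn, smallDom_iff_of_none_iff hnb]
theorem AlphaAbs.good_iff : ∀ {A A' : QAbs var varsort index bindex opsym},
    AlphaAbs A A' → (QGoodAbs A ↔ QGoodAbs A')
  | _, _, .qAbs _ _ _ h => by simpa only [good_qAbs_iff, good_qSwap_iff] using Alpha.good_iff h
end

mutual
theorem QSubst.good : ∀ {X Y : QTerm var varsort index bindex opsym} {y : var} {ys : varsort}
    {Z : QTerm var varsort index bindex opsym}, QSubst X Y y ys Z → QGood X → QGood Y → QGood Z
  | _, _, _, _, _, .var_eq, _, hY => hY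
  | _, _, _, _, _, .var_ne _, hX, _ => hX
  | _, _, _, _, _, .op hn h hnb hb, hX, hY => by
      obtain ⟨h₁, h₂, hs₁, hs₂⟩ := good_qOp_iff.1 hX
      exact good_qOp_iff.2
        ⟨liftP_of_none_iff hn fun i X X' e e' => QSubst.good (h i X X' e e') (h₁ i X e) hY,
          liftP_of_none_iff hnb fun j A A' e e' => QSubstAbs.good (hb j A A' e e') (h₂ j A e) hY,
          (smallDom_iff_of_none_iff hn).1 hs₁, (smallDom_iff_of_none_iff hnb).1 hs₂⟩
theorem QSubstAbs.good : ∀ {A : QAbs var varsort index bindex opsym}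
    {Y : QTerm var varsort index bindex opsym} {y : var} {ys : varsort}
    {B : QAbs var varsort index bindex opsym}, QSubstAbs A Y y ys B → QGoodAbs A → QGood Y →
    QGoodAbs B
  | _, _, _, _, _, .abs _ _ h, hA, hY => .qAbs (QSubst.good h (good_qAbs_iff.1 hA) hY)
end

mutual
theorem QSubst.toDB_eq : ∀ {X Y : QTerm var varsort index bindex opsym} {y : var} {ys : varsort}
    {Z : QTerm var varsort index bindex opsym}, QSubst X Y y ys Z →
    Z.toDB = X.toDB.subst (ys, y) Y.toDB
  | _, _, _, _, _, .var_eq => by simp [QTerm.toDB, DBTerm.subst]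
  | _, _, _, _, _, .var_ne h => by simp [QTerm.toDB, DBTerm.subst, h]
  | _, _, _, _, _, .op hn h hnb hb => by
      simp only [QTerm.toDB, DBTerm.subst, DBTerm.op.injEq, true_and]
      constructor
      · funext i
        rcases Option.cases_of_none_iff (hn i) with ⟨e, e'⟩ | ⟨X, X', e, e'⟩
        · simp [e, e', QTerm.optToDB, DBTerm.subst]
        · simp only [e, e', QTerm.optToDB, QSubst.toDB_eq (h i X X' e e')]
      · funext j
        rcases Option.cases_of_none_iff (hnb j) with ⟨e, e'⟩ | ⟨A, A', e, e'⟩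
        · simp [e, e', QAbs.optToDB, DBTerm.subst]
        · simp only [e, e', QAbs.optToDB, QSubstAbs.toDB_eq (hb j A A' e e')]
theorem QSubstAbs.toDB_eq : ∀ {A : QAbs var varsort index bindex opsym}
    {Y : QTerm var varsort index bindex opsym} {y : var} {ys : varsort}
    {B : QAbs var varsort index bindex opsym}, QSubstAbs A Y y ys B →
    B.toDB = A.toDB.subst (ys, y) Y.toDB
  | _, _, _, _, _, .abs hne hfr h => by
      simp [QAbs.toDB, DBTerm.subst, QSubst.toDB_eq h,
        DBTerm.closeVar_subst hne (QFresh.notMem_fv hfr)]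
end

mutual
def QTerm.vars : QTerm var varsort index bindex opsym → Set var
  | .qVar _ x => {x}
  | .qOp _ inp binp => (⋃ i, QTerm.varsOpt (inp i)) ∪ ⋃ j, QAbs.varsOpt (binp j)
def QAbs.vars : QAbs var varsort index bindex opsym → Set var
  | .qAbs _ x X => insert x (QTerm.vars X)
def QTerm.varsOpt : Option (QTerm var varsort index bindex opsym) → Set var
  | none => ∅
  | some X => QTerm.vars X
def QAbs.varsOpt : Option (QAbs var varsort index bindex opsym) → Set var
  | none => ∅
  | some A => QAbs.vars A
end

mutual
def QTerm.binders : QTerm var varsort index bindex opsym → Set var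
  | .qVar _ _ => ∅
  | .qOp _ inp binp => (⋃ i, QTerm.bindersOpt (inp i)) ∪ ⋃ j, QAbs.bindersOpt (binp j)
def QAbs.binders : QAbs var varsort index bindex opsym → Set var
  | .qAbs _ x X => insert x (QTerm.binders X)
def QTerm.bindersOpt : Option (QTerm var varsort index bindex opsym) → Set var
  | none => ∅
  | some X => QTerm.binders X
def QAbs.bindersOpt : Option (QAbs var varsort index bindex opsym) → Set var
  | none => ∅
  | some A => QAbs.binders A
end

@[simp] theorem QTerm.mem_varsOpt {o : Option (QTerm var varsort index bindex opsym)} {v : var} :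
    v ∈ QTerm.varsOpt o ↔ ∃ X, o = some X ∧ v ∈ X.vars := by
  cases o <;> simp [QTerm.varsOpt]

@[simp] theorem QAbs.mem_varsOpt {o : Option (QAbs var varsort index bindex opsym)} {v : var} :
    v ∈ QAbs.varsOpt o ↔ ∃ A, o = some A ∧ v ∈ A.vars := by
  cases o <;> simp [QAbs.varsOpt]

@[simp] theorem QTerm.mem_bindersOpt {o : Option (QTerm var varsort index bindex opsym)}
    {v : var} : v ∈ QTerm.bindersOpt o ↔ ∃ X, o = some X ∧ v ∈ X.binders := by
  cases o <;> simp [QTerm.bindersOpt]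

@[simp] theorem QAbs.mem_bindersOpt {o : Option (QAbs var varsort index bindex opsym)}
    {v : var} : v ∈ QAbs.bindersOpt o ↔ ∃ A, o = some A ∧ v ∈ A.binders := by
  cases o <;> simp [QAbs.bindersOpt]

theorem binders_subset_vars :
    (∀ X : QTerm var varsort index bindex opsym, X.binders ⊆ X.vars) ∧
    ∀ A : QAbs var varsort index bindex opsym, A.binders ⊆ A.vars := by
  apply QTerm.mutual_induction
  · simp [QTerm.binders]
  · intro d inp binp ih₁ ih₂ v
    simp only [QTerm.binders, QTerm.vars, Set.mem_union, Set.mem_iUnion, QTerm.mem_bindersOpt,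
      QAbs.mem_bindersOpt, QTerm.mem_varsOpt, QAbs.mem_varsOpt]
    rintro (⟨i, X, e, hv⟩ | ⟨j, A, e, hv⟩)
    · exact .inl ⟨i, X, e, ih₁ i X e hv⟩
    · exact .inr ⟨j, A, e, ih₂ j A e hv⟩
  · intro xs x X ih
    exact Set.insert_subset_insert ih

theorem fresh_of_notMem_vars (ys : varsort) (y : var) :
    (∀ X : QTerm var varsort index bindex opsym, y ∉ X.vars → QFresh ys y X) ∧
    ∀ A : QAbs var varsort index bindex opsym, y ∉ A.vars → QFreshAbs ys y A := by
  apply QTerm.mutual_induction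
  · intro xs x h
    exact .qVar fun e => h (by simp [QTerm.vars, (Prod.mk.inj e).2])
  · intro d inp binp ih₁ ih₂ h
    simp only [QTerm.vars, Set.mem_union, Set.mem_iUnion, QTerm.mem_varsOpt, QAbs.mem_varsOpt,
      not_or, not_exists, not_and] at h
    exact .qOp (fun i X e => ih₁ i X e (h.1 i X e)) fun j A e => ih₂ j A e (h.2 j A e)
  · intro xs x X ih h
    exact .qAbs_body (ih fun hy => h (Set.mem_insert_of_mem x hy))

theorem mem_binders_qSwap (z1 z2 : var) (zs : varsort) :
    (∀ X : QTerm var varsort index bindex opsym, ∀ v ∈ (qSwap z1 z2 zs X).binders,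
      v ∈ X.binders ∨ Equiv.swap z1 z2 v ∈ X.binders) ∧
    ∀ A : QAbs var varsort index bindex opsym, ∀ v ∈ (qSwapAbs z1 z2 zs A).binders,
      v ∈ A.binders ∨ Equiv.swap z1 z2 v ∈ A.binders := by
  apply QTerm.mutual_induction
  · simp [QTerm.binders]
  · intro d inp binp ih₁ ih₂ v
    simp only [qSwap_qOp, QTerm.binders, Set.mem_union, Set.mem_iUnion, QTerm.mem_bindersOpt,
      QAbs.mem_bindersOpt, Option.map_eq_some_iff]
    rintro (⟨i, _, ⟨X, e, rfl⟩, hv⟩ | ⟨j, _, ⟨A, e, rfl⟩, hv⟩)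
    · exact (ih₁ i X e v hv).imp (fun h => .inl ⟨i, X, e, h⟩) fun h => .inl ⟨i, X, e, h⟩
    · exact (ih₂ j A e v hv).imp (fun h => .inr ⟨j, A, e, h⟩) fun h => .inr ⟨j, A, e, h⟩
  · intro xs x X ih v
    simp only [qSwapAbs_qAbs, QAbs.binders, Set.mem_insert_iff]
    rintro (rfl | hv)
    · unfold swapVarS
      split_ifs
      · simp [swapVar_eq_swap]
      · exact .inl (.inl rfl)
    · exact (ih v hv).imp .inr .inr

theorem notMem_binders_qSwap {bad : Set var} {z x : var} {zs : varsort}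
    {X : QTerm var varsort index bindex opsym} (hzX : z ∉ X.vars) (hz : z ∉ bad)
    (hX : ∀ v ∈ X.binders, v ∉ bad) : ∀ v ∈ (qSwap z x zs X).binders, v ∉ bad := by
  intro v hv
  rcases (mem_binders_qSwap z x zs).1 X v hv with hv | hv
  · exact hX v hv
  have hvz : Equiv.swap z x v ≠ z := fun h => hzX (h ▸ binders_subset_vars.1 X hv)
  rw [Equiv.swap_apply_def] at hv hvz
  split_ifs at hv hvz with h₁ h₂
  · exact h₁ ▸ hz
  · exact absurd rfl hvz
  · exact hX v hv

theorem mk_union_lt_of_isRegular {α : Type*} (hα : (#α).IsRegular) {s t : Set α}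
    (hs : #s < #α) (ht : #t < #α) : #↥(s ∪ t) < #α :=
  (mk_union_le s t).trans_lt (add_lt_of_lt hα.aleph0_le hs ht)

theorem mk_insert_lt_of_isRegular {α : Type*} (hα : (#α).IsRegular) {s : Set α} (a : α)
    (hs : #s < #α) : #↥(insert a s) < #α :=
  mk_insert_le.trans_lt <| add_lt_of_lt hα.aleph0_le hs <| one_lt_aleph0.trans_le hα.aleph0_le

theorem mk_iUnion_lt_of_smallDom (hreg : (#var).IsRegular) {α β : Type u} {inp : Input α β}
    (hd : smallDom var inp) {F : α → Set var} (h₀ : ∀ a, inp a = none → F a = ∅)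
    (h : ∀ a b, inp a = some b → #(F a) < #var) : #↥(⋃ a, F a) < #var := by
  have hF : (⋃ a, F a) = ⋃ a : idom inp, F a := by
    ext v
    simp only [Set.mem_iUnion, Subtype.exists, idom, Set.mem_ofPred_eq]
    exact ⟨fun ⟨a, ha⟩ => ⟨a, fun e => by simp [h₀ a e] at ha, ha⟩, fun ⟨a, _, ha⟩ => ⟨a, ha⟩⟩
  rw [hF, card_iUnion_lt_iff_forall_of_isRegular hreg hd]
  rintro ⟨a, ha⟩
  obtain ⟨b, hb⟩ := Option.ne_none_iff_exists'.1 ha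
  exact h a b hb

mutual
theorem QGood.mk_vars_lt (hreg : (#var).IsRegular) :
    ∀ {X : QTerm var varsort index bindex opsym}, QGood X → #X.vars < #var
  | _, .qVar => by
      rw [QTerm.vars, mk_singleton]
      exact one_lt_aleph0.trans_le hreg.aleph0_le
  | _, .qOp h₁ h₂ hs₁ hs₂ =>
      mk_union_lt_of_isRegular hreg
        (mk_iUnion_lt_of_smallDom hreg hs₁ (fun i e => by simp [e, QTerm.varsOpt])
          fun i X e => by simpa [e, QTerm.varsOpt] using QGood.mk_vars_lt hreg (h₁ i X e))
        (mk_iUnion_lt_of_smallDom hreg hs₂ (fun j e => by simp [e, QAbs.varsOpt])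
          fun j A e => by simpa [e, QAbs.varsOpt] using QGoodAbs.mk_vars_lt hreg (h₂ j A e))
theorem QGoodAbs.mk_vars_lt (hreg : (#var).IsRegular) :
    ∀ {A : QAbs var varsort index bindex opsym}, QGoodAbs A → #A.vars < #var
  | _, .qAbs h => mk_insert_lt_of_isRegular hreg _ (QGood.mk_vars_lt hreg h)
end

noncomputable def qSwaps (π : List (var × var × varsort))
    (X : QTerm var varsort index bindex opsym) : QTerm var varsort index bindex opsym :=
  π.foldr (fun s X => qSwap s.1 s.2.1 s.2.2 X) X

noncomputable def qSwapsAbs (π : List (var × var × varsort))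
    (A : QAbs var varsort index bindex opsym) : QAbs var varsort index bindex opsym :=
  π.foldr (fun s A => qSwapAbs s.1 s.2.1 s.2.2 A) A

theorem qSwaps_qVar (π : List (var × var × varsort)) (xs : varsort) (x : var) :
    ∃ v, qSwaps π (.qVar xs x : QTerm var varsort index bindex opsym) = .qVar xs v := by
  induction π with
  | nil => exact ⟨x, rfl⟩
  | cons s π ih =>
      obtain ⟨v, hv⟩ := ih
      exact ⟨_, congrArg (qSwap s.1 s.2.1 s.2.2) hv⟩

theorem qSwaps_qOp (π : List (var × var × varsort)) (d : opsym)
    (inp : Input index (QTerm var varsort index bindex opsym))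
    (binp : Input bindex (QAbs var varsort index bindex opsym)) :
    qSwaps π (.qOp d inp binp)
      = .qOp d (fun i => (inp i).map (qSwaps π)) (fun j => (binp j).map (qSwapsAbs π)) := by
  induction π with
  | nil =>
      have h₁ : (qSwaps [] : QTerm var varsort index bindex opsym → _) = id := rfl
      have h₂ : (qSwapsAbs [] : QAbs var varsort index bindex opsym → _) = id := rfl
      simp [h₁, h₂]
  | cons s π ih =>
      change qSwap _ _ _ (qSwaps π _) = _
      simp only [ih, qSwap_qOp, Option.map_map]
      rfl

theorem qSwapsAbs_qAbs (π : List (var × var × varsort)) (xs : varsort) (x : var)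
    (X : QTerm var varsort index bindex opsym) :
    ∃ v, qSwapsAbs π (.qAbs xs x X) = .qAbs xs v (qSwaps π X) := by
  induction π with
  | nil => exact ⟨x, rfl⟩
  | cons s π ih =>
      obtain ⟨v, hv⟩ := ih
      exact ⟨_, congrArg (qSwapAbs s.1 s.2.1 s.2.2) hv⟩

theorem exists_fresh_toDB_qSwap_eq (hreg : (#var).IsRegular) {xs : varsort} {x x' : var}
    {X X' : QTerm var varsort index bindex opsym} (hX : QGood X) (hX' : QGood X')
    (h : X.toDB.closeVar (xs, x) 0 = X'.toDB.closeVar (xs, x') 0) :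
    ∃ u, u ∉ ({x, x'} : Set var) ∧ QFresh xs u X ∧ QFresh xs u X' ∧
      (qSwap u x xs X).toDB = (qSwap u x' xs X').toDB := by
  obtain ⟨u, hu⟩ := compl_nonempty_of_mk_lt_mk <| mk_insert_lt_of_isRegular hreg x <|
    mk_insert_lt_of_isRegular hreg x' <|
      mk_union_lt_of_isRegular hreg (hX.mk_vars_lt hreg) (hX'.mk_vars_lt hreg)
  simp only [Set.mem_compl_iff, Set.mem_insert_iff, Set.mem_union, not_or] at hu
  obtain ⟨hux, hux', huX, huX'⟩ := hu
  have hf := (fresh_of_notMem_vars xs u).1 _ huX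
  have hf' := (fresh_of_notMem_vars xs u).1 _ huX'
  refine ⟨u, by simp [hux, hux'], hf, hf', ?_⟩
  exact DBTerm.closeVar_inj (locallyClosedAt_toDB.1 _) (locallyClosedAt_toDB.1 _)
    ((closeVar_toDB_qSwap hf 0).trans (h.trans (closeVar_toDB_qSwap hf' 0).symm))

theorem alpha_of_toDB_eq (hreg : (#var).IsRegular) :
    (∀ X X' : QTerm var varsort index bindex opsym, QGood X → QGood X' →
      X.toDB = X'.toDB → Alpha X X') ∧
    ∀ A A' : QAbs var varsort index bindex opsym, QGoodAbs A → QGoodAbs A' →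
      A.toDB = A'.toDB → AlphaAbs A A' := by
  -- generalised over swap sequences, since the abstraction case recurses on a swapped body
  suffices h : (∀ X : QTerm var varsort index bindex opsym, ∀ π X', QGood (qSwaps π X) →
      QGood X' → (qSwaps π X).toDB = X'.toDB → Alpha (qSwaps π X) X') ∧
      ∀ A : QAbs var varsort index bindex opsym, ∀ π A', QGoodAbs (qSwapsAbs π A) →
      QGoodAbs A' → (qSwapsAbs π A).toDB = A'.toDB → AlphaAbs (qSwapsAbs π A) A' from
    ⟨fun X => h.1 X [], fun A => h.2 A []⟩
  apply QTerm.mutual_induction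
  · intro xs x π X' _ _ h
    obtain ⟨v, hv⟩ := qSwaps_qVar π xs x
    rw [hv] at h ⊢
    cases X' with
    | qVar =>
        obtain ⟨rfl, rfl⟩ := DBTerm.free.inj h
        exact .qVar
    | qOp => simp [QTerm.toDB] at h
  · intro d inp binp ih₁ ih₂ π X' hg hg' h
    rw [qSwaps_qOp] at hg h ⊢
    cases X' with
    | qVar => simp [QTerm.toDB] at h
    | qOp d' inp' binp' =>
        obtain ⟨rfl, hi, hj⟩ := DBTerm.op.inj h
        obtain ⟨hg₁, hg₂, -, -⟩ := good_qOp_iff.1 hg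
        obtain ⟨hg₁', hg₂', -, -⟩ := good_qOp_iff.1 hg'
        refine .qOp (fun i => ?_) (fun i X X' e e' => ?_) (fun j => ?_) (fun j A A' e e' => ?_)
        · rw [← QTerm.optToDB_eq_none_iff, ← QTerm.optToDB_eq_none_iff, congrFun hi i]
        · obtain ⟨X₀, e₀, rfl⟩ := Option.map_eq_some_iff.1 e
          exact ih₁ i X₀ e₀ π X' (hg₁ i _ e) (hg₁' i X' e')
            (by simpa only [e, e', QTerm.optToDB] using congrFun hi i)
        · rw [← QAbs.optToDB_eq_none_iff, ← QAbs.optToDB_eq_none_iff, congrFun hj j]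
        · obtain ⟨A₀, e₀, rfl⟩ := Option.map_eq_some_iff.1 e
          exact ih₂ j A₀ e₀ π A' (hg₂ j _ e) (hg₂' j A' e')
            (by simpa only [e, e', QAbs.optToDB] using congrFun hj j)
  · intro xs x X ih π A' hg hg' h
    obtain ⟨xt, hxt⟩ := qSwapsAbs_qAbs π xs x X
    rw [hxt] at hg h ⊢
    obtain ⟨xs', x', X'⟩ := A'
    obtain ⟨rfl, h⟩ := DBTerm.abs.inj h
    rw [good_qAbs_iff] at hg hg'
    obtain ⟨u, hu, hf, hf', hu_eq⟩ := exists_fresh_toDB_qSwap_eq hreg hg hg' h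
    exact .qAbs hu hf hf' (ih ((u, xt, xs) :: π) _ (hg.qSwap u xt xs) (hg'.qSwap u x' xs) hu_eq)

theorem exists_alpha_binders_notMem (hreg : (#var).IsRegular) {bad : Set var}
    (hbad : #bad < #var) :
    (∀ X : QTerm var varsort index bindex opsym, QGood X →
      ∃ X', QGood X' ∧ Alpha X X' ∧ ∀ v ∈ X'.binders, v ∉ bad) ∧
    ∀ A : QAbs var varsort index bindex opsym, QGoodAbs A →
      ∃ A', QGoodAbs A' ∧ AlphaAbs A A' ∧ ∀ v ∈ A'.binders, v ∉ bad := by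
  apply QTerm.mutual_induction
  · intro xs x _
    exact ⟨.qVar xs x, .qVar, .qVar, by simp [QTerm.binders]⟩
  · intro d inp binp ih₁ ih₂ hg
    obtain ⟨hg₁, hg₂, hs₁, hs₂⟩ := good_qOp_iff.1 hg
    obtain ⟨inp', hn, hR⟩ := exists_input_rel fun i X e => ih₁ i X e (hg₁ i X e)
    obtain ⟨binp', hnb, hRb⟩ := exists_input_rel fun j A e => ih₂ j A e (hg₂ j A e)
    refine ⟨.qOp d inp' binp', good_qOp_iff.2 ⟨?_, ?_, (smallDom_iff_of_none_iff hn).1 hs₁,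
        (smallDom_iff_of_none_iff hnb).1 hs₂⟩,
      .qOp hn (fun i X X' e e' => (hR i X X' e e').2.1) hnb
        fun j A A' e e' => (hRb j A A' e e').2.1,
      ?_⟩
    · exact liftP_of_none_iff hn fun i X X' e e' => (hR i X X' e e').1
    · exact liftP_of_none_iff hnb fun j A A' e e' => (hRb j A A' e e').1
    · simp only [QTerm.binders, Set.mem_union, Set.mem_iUnion, QTerm.mem_bindersOpt,
        QAbs.mem_bindersOpt]
      rintro v (⟨i, X', e', hv⟩ | ⟨j, A', e', hv⟩)
      · obtain ⟨X, e⟩ := Option.exists_eq_some_of_none_iff (hn i) e'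
        exact (hR i X X' e e').2.2 v hv
      · obtain ⟨A, e⟩ := Option.exists_eq_some_of_none_iff (hnb j) e'
        exact (hRb j A A' e e').2.2 v hv
  · intro xs x X ih hg
    obtain ⟨X', hg', hα, hX'⟩ := ih (good_qAbs_iff.1 hg)
    obtain ⟨z, hz⟩ := compl_nonempty_of_mk_lt_mk <| mk_insert_lt_of_isRegular hreg x <|
      mk_union_lt_of_isRegular hreg hbad (hg'.mk_vars_lt hreg)
    simp only [Set.mem_compl_iff, Set.mem_insert_iff, Set.mem_union, not_or] at hz
    obtain ⟨hzx, hzbad, hzX'⟩ := hz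
    have hf := (fresh_of_notMem_vars xs z).1 _ hzX'
    refine ⟨.qAbs xs z (qSwap z x xs X'), .qAbs (hg'.qSwap z x xs), ?_, ?_⟩
    · refine (alpha_of_toDB_eq hreg).2 _ _ hg (.qAbs (hg'.qSwap z x xs)) ?_
      simp [QAbs.toDB, closeVar_toDB_qSwap hf, Alpha.toDB_eq hα]
    · simp only [QAbs.binders, Set.mem_insert_iff]
      rintro v (rfl | hv)
      · exact hzbad
      · exact notMem_binders_qSwap hzX' hzbad hX' v hv

theorem exists_qSubst (Y : QTerm var varsort index bindex opsym) (y : var) (ys : varsort) :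
    (∀ X : QTerm var varsort index bindex opsym, (∀ w ∈ X.binders, w ∉ insert y Y.vars) →
      ∃ Z, QSubst X Y y ys Z) ∧
    ∀ A : QAbs var varsort index bindex opsym, (∀ w ∈ A.binders, w ∉ insert y Y.vars) →
      ∃ B, QSubstAbs A Y y ys B := by
  apply QTerm.mutual_induction
  · intro xs x _
    by_cases h : (xs, x) = (ys, y)
    · obtain ⟨rfl, rfl⟩ := Prod.mk.inj h
      exact ⟨Y, .var_eq⟩
    · exact ⟨.qVar xs x, .var_ne h⟩
  · intro d inp binp ih₁ ih₂ hb
    simp only [QTerm.binders, Set.mem_union, Set.mem_iUnion, QTerm.mem_bindersOpt,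
      QAbs.mem_bindersOpt] at hb
    obtain ⟨inp', hn, hR⟩ := exists_input_rel fun i X e =>
      ih₁ i X e fun w hw => hb w (.inl ⟨i, X, e, hw⟩)
    obtain ⟨binp', hnb, hRb⟩ := exists_input_rel fun j A e =>
      ih₂ j A e fun w hw => hb w (.inr ⟨j, A, e, hw⟩)
    exact ⟨.qOp d inp' binp', .op hn hR hnb hRb⟩
  · intro xs x X ih hb
    simp only [QAbs.binders, Set.mem_insert_iff, forall_eq_or_imp, not_or] at hb
    obtain ⟨⟨hxy, hxY⟩, hb⟩ := hb
    obtain ⟨Z, hZ⟩ := ih fun w hw => by simpa using hb w hw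
    exact ⟨.qAbs xs x Z, .abs (fun h => hxy (Prod.mk.inj h).2)
      ((fresh_of_notMem_vars xs x).1 Y hxY) hZ⟩

noncomputable def Term.toDB (X : Term var varsort index bindex opsym) :
    DBTerm var varsort index bindex opsym :=
  (trep X).toDB

theorem tmk_trep (X : Term var varsort index bindex opsym) : tmk (trep X) = X :=
  Quot.out_eq X

theorem good_iff_and_toDB_eq_of_tmk_eq {X X' : QTerm var varsort index bindex opsym}
    (h : tmk X = tmk X') : (QGood X ↔ QGood X') ∧ X.toDB = X'.toDB := by
  have hr := Quot.eqvGen_exact h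
  clear h
  induction hr with
  | rel _ _ hα => exact ⟨hα.good_iff, hα.toDB_eq⟩
  | refl => exact ⟨Iff.rfl, rfl⟩
  | symm _ _ _ ih => exact ⟨ih.1.symm, ih.2.symm⟩
  | trans _ _ _ _ _ ih ih' => exact ⟨ih.1.trans ih'.1, ih.2.trans ih'.2⟩

theorem good_tmk_iff {X : QTerm var varsort index bindex opsym} : good (tmk X) ↔ QGood X :=
  (good_iff_and_toDB_eq_of_tmk_eq (tmk_trep (tmk X))).1

theorem Term.toDB_tmk (X : QTerm var varsort index bindex opsym) : (tmk X).toDB = X.toDB :=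
  (good_iff_and_toDB_eq_of_tmk_eq (tmk_trep (tmk X))).2

theorem Term.eq_of_toDB_eq (hreg : (#var).IsRegular)
    {Z₁ Z₂ : Term var varsort index bindex opsym} (h₁ : good Z₁) (h₂ : good Z₂)
    (h : Z₁.toDB = Z₂.toDB) : Z₁ = Z₂ := by
  rw [← tmk_trep Z₁, ← tmk_trep Z₂]
  exact Quot.sound ((alpha_of_toDB_eq hreg).1 _ _ h₁ h₂ h)

theorem SubstRel.good {X Y Z : Term var varsort index bindex opsym} {y : var} {ys : varsort}
    (h : SubstRel X Y y ys Z) (hX : good X) (hY : good Y) : good Z := by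
  obtain ⟨qX, qZ, rfl, rfl, hs⟩ := h
  rw [good_tmk_iff] at hX ⊢
  exact hs.good hX hY

theorem SubstRel.toDB_eq {X Y Z : Term var varsort index bindex opsym} {y : var} {ys : varsort}
    (h : SubstRel X Y y ys Z) : Z.toDB = X.toDB.subst (ys, y) Y.toDB := by
  obtain ⟨qX, qZ, rfl, rfl, hs⟩ := h
  rw [Term.toDB_tmk, Term.toDB_tmk, hs.toDB_eq]
  rfl

theorem exists_substRel (hreg : (#var).IsRegular)
    {X Y : Term var varsort index bindex opsym} (hX : good X) (hY : good Y) (y : var)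
    (ys : varsort) : ∃ Z, SubstRel X Y y ys Z := by
  obtain ⟨X', -, hα, hX'⟩ := (exists_alpha_binders_notMem hreg
    (mk_insert_lt_of_isRegular hreg y (QGood.mk_vars_lt hreg hY))).1 _ hX
  obtain ⟨Z, hZ⟩ := (exists_qSubst (trep Y) y ys).1 X' hX'
  exact ⟨tmk Z, X', Z, (Quot.sound hα).symm.trans (tmk_trep X), rfl, hZ⟩

theorem substRel_subst (hreg : (#var).IsRegular)
    {X Y : Term var varsort index bindex opsym} (hX : good X) (hY : good Y) (y : var)
    (ys : varsort) : SubstRel X Y y ys (subst X Y y ys) := by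
  have h := exists_substRel hreg hX hY y ys
  rw [subst, dif_pos h]
  exact h.choose_spec

/-- substitution of the same variable (at the same varsort)
distributes over itself. -/
theorem subst_subst_same (hinf : Cardinal.aleph0 ≤ Cardinal.mk var)
    (hreg : (Cardinal.mk var).IsRegular)
    (X Y₁ Y₂ : Term var varsort index bindex opsym) (hX : good X) (hY₁ : good Y₁) (hY₂ : good Y₂)
    (y : var) (ys : varsort) :
    subst (subst X Y₁ y ys) Y₂ y ys = subst X (subst Y₁ Y₂ y ys) y ys := by
  have h₁ := substRel_subst hreg hX hY₁ y ys
  have h₂ := substRel_subst hreg hY₁ hY₂ y ys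
  have hg₁ := h₁.good hX hY₁
  have hg₂ := h₂.good hY₁ hY₂
  have h₃ := substRel_subst hreg hg₁ hY₂ y ys
  have h₄ := substRel_subst hreg hX hg₂ y ys
  refine Term.eq_of_toDB_eq hreg (h₃.good hg₁ hY₂) (h₄.good hX hg₂) ?_
  rw [h₃.toDB_eq, h₄.toDB_eq, h₁.toDB_eq, h₂.toDB_eq, DBTerm.subst_subst_same]

end Binding
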